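/- arXiv:2404.12589 — 2 statements merged into one kernel-verified Lean document; each statement's English description precedes it below -/
import Mathlib

section
/- (Partition lemma for KL divergence of Markov chains.) Let 𝒳 = 𝒳⁽¹⁾ × ⋯ × 𝒳⁽ᵈ⁾ be a finite product state space, let π ∈ 𝒫(𝒳) be strictly positive, P, L ∈ ℒ(𝒳), and let ∅ ≠ S ⊆ ⟦d⟧. Then D_KL^π(P ‖ L) ≥ D_KL^{π⁽ˢ⁾}(P_π⁽ˢ⁾ ‖ L_π⁽ˢ⁾). This holds regardless of whether π is a product probability mass or P or L is a product transition matrix. -/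
open Filter Finset
open scoped Classical

/-- `p` is a probability mass on the finite set `Y`. -/
def IsProbMass {Y : Type*} [Fintype Y] (p : Y → ℝ) : Prop :=
  (∀ x, 0 ≤ p x) ∧ ∑ x, p x = 1

/-- `M` is a transition matrix (row-stochastic matrix) on the finite set `Y`. -/
def IsTransMat {Y : Type*} [Fintype Y] (M : Y → Y → ℝ) : Prop :=
  (∀ x y, 0 ≤ M x y) ∧ ∀ x, ∑ y, M x y = 1

/-- The tensor product `⊗ᵢ Lᵢ` of transition matrices on a finite product space. -/
noncomputable def tensorMat {d : ℕ} {X : Fin d → Type*} (L : ∀ i, X i → X i → ℝ) :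
    (∀ i, X i) → (∀ i, X i) → ℝ :=
  fun x y => ∏ i, L i (x i) (y i)

/-- The term `M(x,y)·ln(M(x,y)/L(x,y))` with the conventions `0·ln(0/·) := 0` and
`a·ln(a/0) := +∞` for `a > 0`. -/
noncomputable def klTerm (m l : ℝ) : EReal :=
  if m = 0 then 0 else if l = 0 then ⊤ else ((m * Real.log (m / l) : ℝ) : EReal)

/-- The KL divergence `D_KL^π(M ‖ L)` between transition matrices, with the convention
`0·∞ := 0` (EReal multiplication). -/
noncomputable def klDiv {Y : Type*} [Fintype Y] (π : Y → ℝ) (M L : Y → Y → ℝ) : EReal :=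
  ∑ x, (π x : EReal) * ∑ y, klTerm (M x y) (L x y)

/-- The marginal `π⁽ˢ⁾` of `π` on the coordinates in `S`. -/
noncomputable def margS {d : ℕ} {X : Fin d → Type*} [∀ i, Fintype (X i)]
    (π : (∀ i, X i) → ℝ) (S : Finset (Fin d)) : (∀ j : S, X j.1) → ℝ :=
  fun xs => ∑ x : ∀ i, X i, if ∀ j : S, x j.1 = xs j then π x else 0

/-- The keep-`S`-in transition matrix `P_π⁽ˢ⁾` of `P` with respect to `π`. -/
noncomputable def keepS {d : ℕ} {X : Fin d → Type*} [∀ i, Fintype (X i)]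
    (π : (∀ i, X i) → ℝ) (P : (∀ i, X i) → (∀ i, X i) → ℝ) (S : Finset (Fin d)) :
    (∀ j : S, X j.1) → (∀ j : S, X j.1) → ℝ :=
  fun xs ys =>
    (∑ x : ∀ i, X i, ∑ y : ∀ i, X i,
        if (∀ j : S, x j.1 = xs j) ∧ (∀ j : S, y j.1 = ys j) then π x * P x y else 0) /
      margS π S xs

/-! Keeping the coordinates in `S` lumps the chain along the restriction `x ↦ x⁽ˢ⁾`. Multiplying
out `π`, both divergences are sums of `klTerm` over pairs of states, evaluated at the joint masses
`π(x) P(x,y)` and `π(x) L(x,y)`, respectively at their pushforwards to pairs of restricted states.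
The log-sum inequality on each fibre of the lumping map then gives the inequality. -/

theorem Real.sum_mul_log_sum_div_sum_le {ι : Type*} (t : Finset ι) (a b : ι → ℝ)
    (ha : ∀ i ∈ t, 0 ≤ a i) (hb : ∀ i ∈ t, 0 ≤ b i) (hab : ∀ i ∈ t, b i = 0 → a i = 0)
    (hB : 0 < ∑ i ∈ t, b i) :
    (∑ i ∈ t, a i) * Real.log ((∑ i ∈ t, a i) / ∑ i ∈ t, b i) ≤
      ∑ i ∈ t, a i * Real.log (a i / b i) := by
  set B := ∑ i ∈ t, b i
  -- Jensen for `x ↦ x log x` with weights `b i / B` at the points `a i / b i`.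
  have jensen := Real.convexOn_mul_log.map_sum_le (t := t) (w := fun i => b i / B)
      (p := fun i => a i / b i) (fun i hi => div_nonneg (hb i hi) hB.le)
      (by rw [← Finset.sum_div, div_self hB.ne'])
      (fun i hi => Set.mem_Ici.mpr (div_nonneg (ha i hi) (hb i hi)))
  have weighted (f : ℝ → ℝ) :
      ∑ i ∈ t, b i / B * (a i / b i * f (a i / b i)) = (∑ i ∈ t, a i * f (a i / b i)) / B := by
    rw [Finset.sum_div]
    refine Finset.sum_congr rfl fun i hi => ?_
    rcases eq_or_ne (b i) 0 with h | h
    · simp [hab i hi h, h]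
    · field_simp
  have hmean := weighted fun _ => 1
  simp only [smul_eq_mul, mul_one, weighted Real.log] at jensen hmean
  rw [hmean, div_mul_eq_mul_div, div_le_div_iff_of_pos_right hB] at jensen
  exact jensen

theorem EReal.mul_sum_of_nonneg_of_ne_top {ι : Type*} {x : EReal} (hx : 0 ≤ x) (hx' : x ≠ ⊤)
    (s : Finset ι) (f : ι → EReal) : x * ∑ i ∈ s, f i = ∑ i ∈ s, x * f i :=
  map_sum ({ toFun := (x * ·), map_zero' := mul_zero x
             map_add' := EReal.left_distrib_of_nonneg_of_ne_top hx hx' } : EReal →+ EReal) f s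

theorem EReal.coe_finset_sum {ι : Type*} (s : Finset ι) (f : ι → ℝ) :
    ((∑ i ∈ s, f i : ℝ) : EReal) = ∑ i ∈ s, (f i : EReal) :=
  map_sum ({ toFun := (↑), map_zero' := EReal.coe_zero, map_add' := EReal.coe_add } : ℝ →+ EReal)
    f s

theorem klTerm_ne_bot (m l : ℝ) : klTerm m l ≠ ⊥ := by
  unfold klTerm
  split_ifs
  exacts [EReal.zero_ne_bot, top_ne_bot, EReal.coe_ne_bot _]

theorem klTerm_mul_mul {c : ℝ} (hc : 0 ≤ c) (m l : ℝ) :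
    klTerm (c * m) (c * l) = c * klTerm m l := by
  rcases hc.eq_or_lt with rfl | hc
  · simp [klTerm]
  by_cases hm : m = 0
  · simp [klTerm, hm]
  by_cases hl : l = 0
  · simp [klTerm, hm, hl, hc.ne', EReal.coe_mul_top_of_pos hc]
  simp only [klTerm, mul_eq_zero, hc.ne', hm, hl, or_self, if_false,
    mul_div_mul_left _ _ hc.ne', ← EReal.coe_mul, mul_assoc]

theorem klTerm_sum_le {ι : Type*} (t : Finset ι) (a b : ι → ℝ)
    (ha : ∀ i ∈ t, 0 ≤ a i) (hb : ∀ i ∈ t, 0 ≤ b i) :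
    klTerm (∑ i ∈ t, a i) (∑ i ∈ t, b i) ≤ ∑ i ∈ t, klTerm (a i) (b i) := by
  by_cases hA : ∑ i ∈ t, a i = 0
  · have ha0 := (Finset.sum_eq_zero_iff_of_nonneg ha).1 hA
    rw [klTerm, if_pos hA, Finset.sum_eq_zero fun i hi => by simp [klTerm, ha0 i hi]]
  by_cases hbad : ∃ i ∈ t, b i = 0 ∧ a i ≠ 0
  · obtain ⟨i, hi, hbi, hai⟩ := hbad
    have hi_top : klTerm (a i) (b i) = ⊤ := by rw [klTerm, if_neg hai, if_pos hbi]
    rw [← Finset.add_sum_erase _ (fun j => klTerm (a j) (b j)) hi, hi_top, EReal.top_add_of_ne_bot]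
    · exact le_top
    · exact Finset.sum_induction _ (· ≠ ⊥) (fun _ _ hx hy => EReal.add_ne_bot_iff.2 ⟨hx, hy⟩)
        EReal.zero_ne_bot fun j _ => klTerm_ne_bot (a j) (b j)
  push Not at hbad
  have hB : 0 < ∑ i ∈ t, b i := by
    refine (Finset.sum_nonneg hb).lt_of_ne fun hB => hA ?_
    exact Finset.sum_eq_zero fun i hi =>
      hbad i hi ((Finset.sum_eq_zero_iff_of_nonneg hb).1 hB.symm i hi)
  have hterm : ∀ i ∈ t, klTerm (a i) (b i) = ((a i * Real.log (a i / b i) : ℝ) : EReal) := by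
    intro i hi
    by_cases hai : a i = 0
    · simp [klTerm, hai]
    · rw [klTerm, if_neg hai, if_neg fun h => hai (hbad i hi h)]
  rw [klTerm, if_neg hA, if_neg hB.ne', Finset.sum_congr rfl hterm, ← EReal.coe_finset_sum]
  exact_mod_cast Real.sum_mul_log_sum_div_sum_le t a b ha hb hbad hB

theorem klTerm_sum_fiberwise_le {α β : Type*} [Fintype α] [Fintype β] [DecidableEq β] (g : α → β)
    (a b : α → ℝ) (ha : ∀ p, 0 ≤ a p) (hb : ∀ p, 0 ≤ b p) :
    ∑ q, klTerm (∑ p with g p = q, a p) (∑ p with g p = q, b p) ≤ ∑ p, klTerm (a p) (b p) :=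
  calc ∑ q, klTerm (∑ p with g p = q, a p) (∑ p with g p = q, b p)
      ≤ ∑ q, ∑ p with g p = q, klTerm (a p) (b p) :=
        Finset.sum_le_sum fun _ _ => klTerm_sum_le _ a b (fun p _ => ha p) fun p _ => hb p
    _ = ∑ p, klTerm (a p) (b p) := Finset.sum_fiberwise _ g _

theorem klDiv_eq_sum_klTerm {Y : Type*} [Fintype Y] {π : Y → ℝ} (hπ : ∀ x, 0 ≤ π x)
    (M L : Y → Y → ℝ) :
    klDiv π M L = ∑ p : Y × Y, klTerm (π p.1 * M p.1 p.2) (π p.1 * L p.1 p.2) := by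
  rw [klDiv, Fintype.sum_prod_type]
  refine Finset.sum_congr rfl fun x _ => ?_
  rw [EReal.mul_sum_of_nonneg_of_ne_top (EReal.coe_nonneg.2 (hπ x)) (EReal.coe_ne_top _)]
  exact Finset.sum_congr rfl fun y _ => (klTerm_mul_mul (hπ x) _ _).symm

section Lumping

variable {α β : Type*} [Fintype α]

noncomputable def pushMass (g : α → β) (π : α → ℝ) (b : β) : ℝ :=
  ∑ a with g a = b, π a

noncomputable def lumpFlow (g : α → β) (π : α → ℝ) (M : α → α → ℝ) (q : β × β) : ℝ :=
  ∑ p with Prod.map g g p = q, π p.1 * M p.1 p.2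

noncomputable def lumpMat (g : α → β) (π : α → ℝ) (M : α → α → ℝ) (b b' : β) : ℝ :=
  lumpFlow g π M (b, b') / pushMass g π b

theorem pushMass_nonneg {g : α → β} {π : α → ℝ} (hπ : ∀ a, 0 ≤ π a) (b : β) :
    0 ≤ pushMass g π b :=
  Finset.sum_nonneg fun a _ => hπ a

theorem pushMass_mul_lumpMat {g : α → β} {π : α → ℝ} (hπ : ∀ a, 0 ≤ π a)
    (M : α → α → ℝ) (b b' : β) :
    pushMass g π b * lumpMat g π M b b' = lumpFlow g π M (b, b') := by
  by_cases h0 : pushMass g π b = 0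
  · have hπ0 := (Finset.sum_eq_zero_iff_of_nonneg fun a _ => hπ a).1 h0
    refine h0 ▸ (zero_mul _).trans (Finset.sum_eq_zero fun p hp => ?_).symm
    simp only [Finset.mem_filter, Finset.mem_univ, true_and, Prod.map, Prod.mk.injEq] at hp
    simp [hπ0 p.1 (by simpa using hp.1)]
  · exact mul_div_cancel₀ _ h0

theorem klDiv_lumpMat_le [Fintype β] (g : α → β) {π : α → ℝ} (hπ : ∀ a, 0 ≤ π a)
    {P L : α → α → ℝ} (hP : ∀ x y, 0 ≤ P x y) (hL : ∀ x y, 0 ≤ L x y) :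
    klDiv (pushMass g π) (lumpMat g π P) (lumpMat g π L) ≤ klDiv π P L := by
  rw [klDiv_eq_sum_klTerm (pushMass_nonneg hπ), klDiv_eq_sum_klTerm hπ]
  simp only [pushMass_mul_lumpMat hπ, Prod.mk.eta]
  exact klTerm_sum_fiberwise_le (Prod.map g g) _ _
    (fun p => mul_nonneg (hπ p.1) (hP p.1 p.2)) fun p => mul_nonneg (hπ p.1) (hL p.1 p.2)

end Lumping

theorem margS_eq_pushMass {d : ℕ} {X : Fin d → Type*} [∀ i, Fintype (X i)]
    (π : (∀ i, X i) → ℝ) (S : Finset (Fin d)) : margS π S = pushMass S.restrict π := by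
  ext xs
  simp [margS, pushMass, Finset.sum_filter, funext_iff, Finset.restrict]

theorem keepS_eq_lumpMat {d : ℕ} {X : Fin d → Type*} [∀ i, Fintype (X i)]
    (π : (∀ i, X i) → ℝ) (M : (∀ i, X i) → (∀ i, X i) → ℝ) (S : Finset (Fin d)) :
    keepS π M S = lumpMat S.restrict π M := by
  ext xs ys
  rw [keepS, lumpMat, lumpFlow, margS_eq_pushMass, Finset.sum_filter, Fintype.sum_prod_type]
  simp [funext_iff, Finset.restrict]

theorem stmt11_general {d : ℕ} {X : Fin d → Type*} [∀ i, Fintype (X i)]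
    (π : (∀ i, X i) → ℝ) (hπ : IsProbMass π)
    (P L : (∀ i, X i) → (∀ i, X i) → ℝ) (hP : IsTransMat P) (hL : IsTransMat L)
    (S : Finset (Fin d)) :
    klDiv (margS π S) (keepS π P S) (keepS π L S) ≤ klDiv π P L := by
  rw [margS_eq_pushMass, keepS_eq_lumpMat, keepS_eq_lumpMat]
  exact klDiv_lumpMat_le S.restrict hπ.1 hP.1 hL.1

/-- Partition lemma for the KL divergence of Markov chains:
`D_KL^π(P ‖ L) ≥ D_KL^{π⁽ˢ⁾}(P_π⁽ˢ⁾ ‖ L_π⁽ˢ⁾)` for every nonempty `S ⊆ ⟦d⟧`. -/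
theorem stmt11 {d : ℕ} {X : Fin d → Type*} [∀ i, Fintype (X i)]
    (π : (∀ i, X i) → ℝ) (hπ : IsProbMass π) (hpos : ∀ x, 0 < π x)
    (P L : (∀ i, X i) → (∀ i, X i) → ℝ) (hP : IsTransMat P) (hL : IsTransMat L)
    (S : Finset (Fin d)) (hS : S.Nonempty) :
    klDiv (margS π S) (keepS π P S) (keepS π L S) ≤ klDiv π P L :=
  stmt11_general π hπ P L hP hL S
end

section
/- (Decomposition of the distance to independence.) Let 𝒳 = 𝒳⁽¹⁾ × ⋯ × 𝒳⁽ᵈ⁾ be a finite product state space, (Sᵢ)_{i=1}^n a partition of ⟦d⟧ into nonempty mutually disjoint blocks, π ∈ 𝒫(𝒳) strictly positive, and P ∈ ℒ(𝒳). Then 𝕀^π(P) = D_KL^π(P ‖ ⊗_{i=1}^n P_π^{(Sᵢ)}) + Σ_{i=1}^n 𝕀^{π^{(Sᵢ)}}(P_π^{(Sᵢ)}); that is, the distance to independence of P equals the distance to (Sᵢ)-factorizability of P plus the sum of the distances to independence of the keep-Sᵢ-in transition matrices. -/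
open Filter Finset
open scoped Classical

/-- The distance to independence `𝕀^π(P)` with respect to the KL divergence. -/
noncomputable def distIndepKL {d : ℕ} {X : Fin d → Type*} [∀ i, Fintype (X i)]
    (π : (∀ i, X i) → ℝ) (P : (∀ i, X i) → (∀ i, X i) → ℝ) : EReal :=
  ⨅ (L : ∀ i, X i → X i → ℝ) (_ : ∀ i, IsTransMat (L i)), klDiv π P (tensorMat L)

/-- The distance to independence `𝕀^μ(Q)` of a transition matrix `Q` on the product
space `𝒳⁽ˢ⁾ = ∏_{j ∈ S} 𝒳⁽ʲ⁾`, with respect to the KL divergence. -/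
noncomputable def distIndepOn {d : ℕ} {X : Fin d → Type*} [∀ i, Fintype (X i)]
    (S : Finset (Fin d)) (μ : (∀ j : S, X j.1) → ℝ)
    (Q : (∀ j : S, X j.1) → (∀ j : S, X j.1) → ℝ) : EReal :=
  ⨅ (L : ∀ j : S, X j.1 → X j.1 → ℝ) (_ : ∀ j, IsTransMat (L j)),
    klDiv μ Q fun xs ys => ∏ j, L j (xs j) (ys j)

/-- The restriction of `x` to the coordinates in `S`. -/
noncomputable def restr {d : ℕ} {X : Fin d → Type*} (S : Finset (Fin d)) (x : ∀ i, X i) :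
    ∀ j : S, X j.1 :=
  fun j => x j.1

/-- The tensor product over the blocks `S i` of transition matrices `L i` on `𝒳^{(S i)}`. -/
noncomputable def tensorBlocks {d n : ℕ} {X : Fin d → Type*} (S : Fin n → Finset (Fin d))
    (L : ∀ i : Fin n, (∀ j : S i, X j.1) → (∀ j : S i, X j.1) → ℝ) :
    (∀ i, X i) → (∀ i, X i) → ℝ :=
  fun x y => ∏ i, L i (restr (S i) x) (restr (S i) y)

/-!
Write `Kᵢ := P_π^{(Sᵢ)}`. For coordinatewise transition matrices `L`, the tensor `⊗ⱼ Lⱼ` is the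
block tensor `⊗ᵢ Λᵢ` with `Λᵢ := ⊗_{j ∈ Sᵢ} Lⱼ`. Pointwise
`ln (P / ∏ᵢ Λᵢ) = ln (P / ∏ᵢ Kᵢ) + ∑ᵢ ln (Kᵢ / Λᵢ)`, and integrating a function of
`(x^{(Sᵢ)}, y^{(Sᵢ)})` against `π(x) P(x, y)` is integrating it against `π^{(Sᵢ)} Kᵢ`; this gives
the chain rule `D(P ‖ ⊗ᵢ Λᵢ) = D(P ‖ ⊗ᵢ Kᵢ) + ∑ᵢ D(Kᵢ ‖ Λᵢ)`, both sides being `+∞` together.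
Minimizing over `L` then minimizes independently over the families `(Lⱼ)_{j ∈ Sᵢ}`, and since
every divergence between transition matrices is nonnegative (Gibbs), the infimum of the sum is
the sum of the infima.
-/

namespace EReal

lemma coe_finset_sum_s15 {α : Type*} (s : Finset α) (f : α → ℝ) :
    ((∑ a ∈ s, f a : ℝ) : EReal) = ∑ a ∈ s, (f a : EReal) :=
  map_sum (⟨⟨Real.toEReal, coe_zero⟩, coe_add⟩ : ℝ →+ EReal) f s

lemma sum_ne_bot {α : Type*} {s : Finset α} {f : α → EReal} (h : ∀ a ∈ s, f a ≠ ⊥) :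
    ∑ a ∈ s, f a ≠ ⊥ :=
  fun hbot => by obtain ⟨a, ha, hfa⟩ := WithBot.sum_eq_bot_iff.1 hbot; exact h a ha hfa

lemma sum_eq_top {α : Type*} {s : Finset α} {f : α → EReal} (h : ∀ a ∈ s, f a ≠ ⊥) {a : α}
    (ha : a ∈ s) (hfa : f a = ⊤) : ∑ a ∈ s, f a = ⊤ := by
  rw [← Finset.add_sum_erase s f ha, hfa,
    top_add_of_ne_bot (sum_ne_bot fun b hb => h b (Finset.mem_of_mem_erase hb))]

lemma iInf_add_iInf {ι : Sort*} {f g : ι → EReal} (h : ∀ i j, ∃ k, f k + g k ≤ f i + g j)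
    (hf : iInf f ≠ ⊥) (hg : iInf g ≠ ⊥) : iInf f + iInf g = ⨅ a, f a + g a := by
  refine le_antisymm (le_iInf fun a => add_le_add (iInf_le f a) (iInf_le g a)) ?_
  refine le_add_of_forall_gt (.inl hf) (.inr hg) fun a ha b hb => ?_
  obtain ⟨i, hi⟩ := iInf_lt_iff.1 ha
  obtain ⟨j, hj⟩ := iInf_lt_iff.1 hb
  obtain ⟨k, hk⟩ := h i j
  exact iInf_le_of_le k (hk.trans (add_le_add hi.le hj.le))

lemma add_iInf {ι : Sort*} [Nonempty ι] {a : EReal} {g : ι → EReal} (ha : a ≠ ⊥)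
    (hg : iInf g ≠ ⊥) : a + iInf g = ⨅ i, a + g i := by
  simpa using iInf_add_iInf (f := fun _ => a) (fun _ j => ⟨j, le_rfl⟩) (by simpa) hg

lemma iInf_sum_pi {ι : Type*} [DecidableEq ι] {α : ι → Type*} [∀ i, Nonempty (α i)]
    {f : ∀ i, α i → EReal} (hf : ∀ i a, 0 ≤ f i a) (s : Finset ι) :
    ⨅ a : ∀ i, α i, ∑ i ∈ s, f i (a i) = ∑ i ∈ s, ⨅ x, f i x := by
  induction s using Finset.induction_on with
  | empty => simp
  | insert i₀ s hi₀ ih =>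
    have hnonneg : ∀ a : ∀ i, α i, 0 ≤ ∑ i ∈ s, f i (a i) :=
      fun a => Finset.sum_nonneg fun i _ => hf i (a i)
    simp only [Finset.sum_insert hi₀]
    rw [← ih, ← (Function.surjective_eval i₀).iInf_comp (f i₀), iInf_add_iInf]
    · intro a b
      refine ⟨Function.update b i₀ (a i₀), le_of_eq ?_⟩
      rw [Function.eval, Function.eval, Function.update_self, Finset.sum_congr rfl fun i hi =>
        by rw [Function.update_of_ne (ne_of_mem_of_not_mem hi hi₀)]]
    · exact ne_bot_of_le_ne_bot zero_ne_bot (le_iInf fun a => hf i₀ (a i₀))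
    · exact ne_bot_of_le_ne_bot zero_ne_bot (le_iInf hnonneg)

end EReal

lemma iInf_pi_subtype {α : Type*} [CompleteLattice α] {ι : Type*} {β : ι → Type*}
    (p : ∀ i, β i → Prop) (F : (∀ i, β i) → α) :
    ⨅ (f : ∀ i, β i) (_ : ∀ i, p i (f i)), F f =
      ⨅ g : ∀ i, Subtype (p i), F fun i => (g i).1 := by
  rw [iInf_subtype']
  exact (Equiv.subtypePiEquivPi.symm.iInf_comp (g := fun f => F f.1)).symm

section Partition

open Function

variable {ι κ : Type*} {S : κ → Finset ι} (hdisj : Pairwise (Disjoint on S))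
  (hcov : ∀ j, ∃ i, j ∈ S i)
include hdisj hcov

lemma Finset.prod_univ_eq_prod_blocks [Fintype ι] [Fintype κ] [DecidableEq ι] {M : Type*}
    [CommMonoid M] (f : ι → M) : ∏ j, f j = ∏ i, ∏ j : S i, f j := by
  have huniv : Finset.univ.biUnion S = Finset.univ :=
    Finset.eq_univ_of_forall fun j =>
      Finset.mem_biUnion.2 <| (hcov j).imp fun i hi => ⟨Finset.mem_univ i, hi⟩
  rw [← huniv, Finset.prod_biUnion fun i _ i' _ h => hdisj h]
  exact Finset.prod_congr rfl fun i _ => (Finset.prod_coe_sort _ _).symm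

lemma surjective_restrict_blocks {T : ι → Type*} :
    Function.Surjective fun (L : ∀ j, T j) (i : κ) (j : S i) => L j := by
  intro Lb
  choose owner howner using hcov
  refine ⟨fun j => Lb (owner j) ⟨j, howner j⟩, funext fun i => funext fun ⟨j, hj⟩ => ?_⟩
  have howner_eq : owner j = i := by
    by_contra h
    exact Finset.disjoint_left.1 (hdisj h) (howner j) hj
  have key : ∀ i' (h : j ∈ S i'), i' = i → Lb i' ⟨j, h⟩ = Lb i ⟨j, hj⟩ := by
    rintro _ _ rfl
    rfl
  exact key _ _ howner_eq

lemma iInf_add_sum_blocks [Fintype κ] [DecidableEq κ] {T : ι → Type*} [∀ j, Nonempty (T j)]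
    {c : EReal} (hc : c ≠ ⊥) (D : ∀ i, (∀ j : S i, T j) → EReal) (hD : ∀ i L, 0 ≤ D i L) :
    ⨅ L : ∀ j, T j, c + ∑ i, D i (fun j => L j) = c + ∑ i, ⨅ L, D i L := by
  rw [← EReal.add_iInf hc, (surjective_restrict_blocks hdisj hcov).iInf_comp
    fun L => ∑ i, D i (L i), EReal.iInf_sum_pi hD]
  exact ne_bot_of_le_ne_bot EReal.zero_ne_bot
    (le_iInf fun L => Finset.sum_nonneg fun i _ => hD i _)

end Partition

lemma mul_log_div_prod {ι : Type*} {s : Finset ι} (p : ℝ) {a b : ι → ℝ}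
    (ha : ∀ i ∈ s, a i ≠ 0) (hb : ∀ i ∈ s, b i ≠ 0) :
    p * Real.log (p / ∏ i ∈ s, b i) =
      p * Real.log (p / ∏ i ∈ s, a i) + ∑ i ∈ s, p * Real.log (a i / b i) := by
  rcases eq_or_ne p 0 with rfl | hp
  · simp
  rw [Real.log_div hp (Finset.prod_ne_zero_iff.2 hb),
    Real.log_div hp (Finset.prod_ne_zero_iff.2 ha), Real.log_prod hb, Real.log_prod ha,
    ← Finset.mul_sum, ← mul_add,
    Finset.sum_congr rfl fun i hi => Real.log_div (ha i hi) (hb i hi), Finset.sum_sub_distrib]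
  ring

lemma IsProbMass.nonempty {Y : Type*} [Fintype Y] {p : Y → ℝ} (hp : IsProbMass p) :
    Nonempty Y := by
  by_contra h
  rw [not_nonempty_iff] at h
  simpa using hp.2

lemma isTransMat_uniform (Y : Type*) [Fintype Y] :
    IsTransMat fun _ _ : Y => (Fintype.card Y : ℝ)⁻¹ := by
  refine ⟨fun _ _ => by positivity, fun x => ?_⟩
  have : Nonempty Y := ⟨x⟩
  simp

lemma isTransMat_pi {ι : Type*} [Fintype ι] [DecidableEq ι] {Y : ι → Type*}
    [∀ i, Fintype (Y i)] {L : ∀ i, Y i → Y i → ℝ} (hL : ∀ i, IsTransMat (L i)) :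
    IsTransMat fun x y : (∀ i, Y i) => ∏ i, L i (x i) (y i) := by
  refine ⟨fun x y => Finset.prod_nonneg fun i _ => (hL i).1 _ _, fun x => ?_⟩
  rw [← Fintype.prod_sum]
  exact Finset.prod_eq_one fun i _ => (hL i).2 _

section KLDivergence

lemma coe_le_klTerm (m l : ℝ) : ((m * Real.log (m / l) : ℝ) : EReal) ≤ klTerm m l := by
  unfold klTerm
  split_ifs with hm
  · simp [hm]
  · exact le_top
  · exact le_rfl

lemma klTerm_eq_coe {m l : ℝ} (h : m ≠ 0 → l ≠ 0) :
    klTerm m l = ((m * Real.log (m / l) : ℝ) : EReal) := by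
  unfold klTerm
  split_ifs with hm hl
  · simp [hm]
  · exact absurd hl (h hm)
  · rfl

lemma coe_sub_le_klTerm {m l : ℝ} (hm : 0 ≤ m) (hl : 0 ≤ l) :
    ((m - l : ℝ) : EReal) ≤ klTerm m l := by
  unfold klTerm
  split_ifs with hm0 hl0
  · exact EReal.coe_nonpos.2 (by linarith)
  · exact le_top
  · have hmpos : 0 < m := hm.lt_of_ne' hm0
    have hlog := Real.one_sub_inv_le_log_of_pos (div_pos hmpos (hl.lt_of_ne' hl0))
    rw [inv_div] at hlog
    refine EReal.coe_le_coe_iff.2 ?_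
    calc m - l = m * (1 - l / m) := by field_simp
      _ ≤ m * Real.log (m / l) := mul_le_mul_of_nonneg_left hlog hm

variable {Y : Type*} [Fintype Y] {π : Y → ℝ}

/-- Equals `klDiv π M L` only where `M` is absolutely continuous w.r.t. `L`: at `L x y = 0`
Lean reads `ln (a / 0)` as `ln 0 = 0`. -/
noncomputable def klDivReal (π : Y → ℝ) (M L : Y → Y → ℝ) : ℝ :=
  ∑ x, π x * ∑ y, M x y * Real.log (M x y / L x y)

lemma coe_le_mul_sum_klTerm {a : ℝ} (ha : 0 ≤ a) (m l : Y → ℝ) :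
    ((a * ∑ y, m y * Real.log (m y / l y) : ℝ) : EReal) ≤
      (a : EReal) * ∑ y, klTerm (m y) (l y) := by
  rw [EReal.coe_mul, EReal.coe_finset_sum_s15]
  exact mul_le_mul_of_nonneg_left (Finset.sum_le_sum fun y _ => coe_le_klTerm _ _)
    (EReal.coe_nonneg.2 ha)

lemma coe_klDivReal_le_klDiv (hπ : ∀ x, 0 ≤ π x) (M L : Y → Y → ℝ) :
    (klDivReal π M L : EReal) ≤ klDiv π M L := by
  rw [klDivReal, EReal.coe_finset_sum_s15]
  exact Finset.sum_le_sum fun x _ => coe_le_mul_sum_klTerm (hπ x) _ _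

lemma klDiv_ne_bot (hπ : ∀ x, 0 ≤ π x) (M L : Y → Y → ℝ) : klDiv π M L ≠ ⊥ :=
  ne_bot_of_le_ne_bot (EReal.coe_ne_bot _) (coe_klDivReal_le_klDiv hπ M L)

lemma klDiv_eq_coe_klDivReal {M L : Y → Y → ℝ} (h : ∀ x y, M x y ≠ 0 → L x y ≠ 0) :
    klDiv π M L = klDivReal π M L := by
  simp only [klDiv, klDivReal, EReal.coe_finset_sum_s15, EReal.coe_mul, klTerm_eq_coe (h _ _)]

lemma klDiv_eq_top (hπ : ∀ x, 0 ≤ π x) {M L : Y → Y → ℝ} {x y : Y} (hx : 0 < π x)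
    (hM : M x y ≠ 0) (hL : L x y = 0) : klDiv π M L = ⊤ := by
  have hrow : ∑ y', klTerm (M x y') (L x y') = ⊤ :=
    EReal.sum_eq_top (fun y' _ => ne_bot_of_le_ne_bot (EReal.coe_ne_bot _) (coe_le_klTerm _ _))
      (Finset.mem_univ y) (by rw [klTerm, if_neg hM, if_pos hL])
  refine EReal.sum_eq_top (fun x' _ => ?_) (Finset.mem_univ x)
    (by rw [hrow, EReal.coe_mul_top_of_pos hx])
  exact ne_bot_of_le_ne_bot (EReal.coe_ne_bot _) (coe_le_mul_sum_klTerm (hπ x') _ _)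

lemma klDiv_nonneg (hπ : ∀ x, 0 ≤ π x) {M L : Y → Y → ℝ} (hM : IsTransMat M)
    (hL : IsTransMat L) : 0 ≤ klDiv π M L := by
  refine Finset.sum_nonneg fun x _ => EReal.mul_nonneg (EReal.coe_nonneg.2 (hπ x)) ?_
  calc (0 : EReal) = ((∑ y, (M x y - L x y) : ℝ) : EReal) := by
        rw [Finset.sum_sub_distrib, hM.2, hL.2, sub_self, EReal.coe_zero]
    _ ≤ ∑ y, klTerm (M x y) (L x y) := by
        rw [EReal.coe_finset_sum_s15]
        exact Finset.sum_le_sum fun y _ => coe_sub_le_klTerm (hM.1 x y) (hL.1 x y)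

end KLDivergence

lemma exists_restr_eq {d : ℕ} {X : Fin d → Type*} [Nonempty (∀ i, X i)] (S : Finset (Fin d))
    (xs : ∀ j : S, X j.1) : ∃ x, restr S x = xs := by
  obtain ⟨x₀⟩ := ‹Nonempty (∀ i, X i)›
  exact ⟨fun i => if h : i ∈ S then xs ⟨i, h⟩ else x₀ i, funext fun j => by simp [restr, j.2]⟩

lemma tensorMat_eq_tensorBlocks {d n : ℕ} {X : Fin d → Type*} {S : Fin n → Finset (Fin d)}
    (hdisj : Pairwise (Function.onFun Disjoint S)) (hcov : ∀ j, ∃ i, j ∈ S i)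
    (L : ∀ j, X j → X j → ℝ) :
    tensorMat L = tensorBlocks S fun i xs ys => ∏ j : S i, L j (xs j) (ys j) :=
  funext₂ fun x y => Finset.prod_univ_eq_prod_blocks hdisj hcov fun j => L j (x j) (y j)

section KeepIn

variable {d : ℕ} {X : Fin d → Type*} [∀ i, Fintype (X i)] {π : (∀ i, X i) → ℝ}
  {P : (∀ i, X i) → (∀ i, X i) → ℝ} (S : Finset (Fin d))

lemma margS_eq_sum_ite (xs : ∀ j : S, X j.1) :
    margS π S xs = ∑ x, if restr S x = xs then π x else 0 := by
  simp only [margS, funext_iff, restr]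

lemma margS_mul_keepS {xs : ∀ j : S, X j.1} (hxs : margS π S xs ≠ 0) (ys : ∀ j : S, X j.1) :
    margS π S xs * keepS π P S xs ys =
      ∑ x, ∑ y, if restr S x = xs ∧ restr S y = ys then π x * P x y else 0 := by
  rw [keepS, mul_div_cancel₀ _ hxs]
  simp only [funext_iff, restr]

variable {S} (hpos : ∀ x, 0 < π x)
include hpos

lemma margS_pos [Nonempty (∀ i, X i)] (xs : ∀ j : S, X j.1) : 0 < margS π S xs := by
  obtain ⟨x, hx⟩ := exists_restr_eq S xs
  rw [margS_eq_sum_ite]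
  exact Finset.sum_pos' (fun x _ => ite_nonneg (hpos x).le le_rfl)
    ⟨x, Finset.mem_univ x, by simp [hx, hpos x]⟩

variable [Nonempty (∀ i, X i)]

lemma margS_mul_sum_keepS_mul (G : (∀ j : S, X j.1) → ℝ) (xs : ∀ j : S, X j.1) :
    margS π S xs * ∑ ys, keepS π P S xs ys * G ys =
      ∑ x, if restr S x = xs then π x * ∑ y, P x y * G (restr S y) else 0 := by
  simp only [Finset.mul_sum, ← mul_assoc, margS_mul_keepS S (margS_pos hpos xs).ne']
  simp only [Finset.sum_mul, ite_mul, zero_mul, ite_and]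
  rw [Finset.sum_comm]
  refine Finset.sum_congr rfl fun x _ => ?_
  split_ifs
  · rw [Finset.sum_comm]
    simp [mul_assoc]
  · simp

lemma sum_margS_mul_sum_keepS_mul (G : (∀ j : S, X j.1) → (∀ j : S, X j.1) → ℝ) :
    ∑ xs, margS π S xs * ∑ ys, keepS π P S xs ys * G xs ys =
      ∑ x, π x * ∑ y, P x y * G (restr S x) (restr S y) := by
  simp only [margS_mul_sum_keepS_mul hpos]
  rw [Finset.sum_comm]
  simp

lemma isTransMat_keepS (hP : IsTransMat P) : IsTransMat (keepS π P S) := by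
  refine ⟨fun xs ys => div_nonneg (Finset.sum_nonneg fun x _ => Finset.sum_nonneg fun y _ =>
    ite_nonneg (mul_nonneg (hpos x).le (hP.1 x y)) le_rfl) (margS_pos hpos xs).le, fun xs => ?_⟩
  have h := margS_mul_sum_keepS_mul (P := P) hpos (fun _ => 1) xs
  simp only [mul_one, hP.2, ← margS_eq_sum_ite] at h
  exact (mul_eq_left₀ (margS_pos hpos xs).ne').1 h

lemma keepS_restr_pos (hP : IsTransMat P) {x y : ∀ i, X i} (hxy : P x y ≠ 0) :
    0 < keepS π P S (restr S x) (restr S y) := by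
  refine pos_of_mul_pos_right ?_ (margS_pos hpos (restr S x)).le
  rw [margS_mul_keepS S (margS_pos hpos _).ne']
  have hnonneg : ∀ x' y', 0 ≤ if restr S x' = restr S x ∧ restr S y' = restr S y
      then π x' * P x' y' else 0 :=
    fun x' y' => ite_nonneg (mul_nonneg (hpos x').le (hP.1 x' y')) le_rfl
  refine Finset.sum_pos' (fun x' _ => Finset.sum_nonneg fun y' _ => hnonneg x' y')
    ⟨x, Finset.mem_univ x, Finset.sum_pos' (fun y' _ => hnonneg x y') ⟨y, Finset.mem_univ y, ?_⟩⟩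
  rw [if_pos ⟨rfl, rfl⟩]
  exact mul_pos (hpos x) ((hP.1 x y).lt_of_ne' hxy)

lemma exists_restr_of_keepS_ne_zero {xs ys : ∀ j : S, X j.1} (h : keepS π P S xs ys ≠ 0) :
    ∃ x y, restr S x = xs ∧ restr S y = ys ∧ P x y ≠ 0 := by
  have hsum := mul_ne_zero (margS_pos hpos xs).ne' h
  rw [margS_mul_keepS S (margS_pos hpos xs).ne'] at hsum
  obtain ⟨x, -, hx⟩ := Finset.exists_ne_zero_of_sum_ne_zero hsum
  obtain ⟨y, -, hy⟩ := Finset.exists_ne_zero_of_sum_ne_zero hx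
  by_cases hr : restr S x = xs ∧ restr S y = ys
  · rw [if_pos hr] at hy
    exact ⟨x, y, hr.1, hr.2, right_ne_zero_of_mul hy⟩
  · exact absurd (if_neg hr) hy

end KeepIn

section ChainRule

variable {d n : ℕ} {X : Fin d → Type*} [∀ i, Fintype (X i)] (S : Fin n → Finset (Fin d))
  {π : (∀ i, X i) → ℝ} {P : (∀ i, X i) → (∀ i, X i) → ℝ} (hpos : ∀ x, 0 < π x)
  [Nonempty (∀ i, X i)] (hP : IsTransMat P)
include hpos hP

lemma klDivReal_tensorBlocks (Λ : ∀ i, (∀ j : S i, X j.1) → (∀ j : S i, X j.1) → ℝ)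
    (hΛ : ∀ x y, P x y ≠ 0 → ∀ i, Λ i (restr (S i) x) (restr (S i) y) ≠ 0) :
    klDivReal π P (tensorBlocks S Λ) =
      klDivReal π P (tensorBlocks S fun i => keepS π P (S i)) +
        ∑ i, klDivReal (margS π (S i)) (keepS π P (S i)) (Λ i) := by
  simp only [klDivReal, sum_margS_mul_sum_keepS_mul hpos]
  rw [Finset.sum_comm, ← Finset.sum_add_distrib]
  refine Finset.sum_congr rfl fun x _ => ?_
  simp only [← Finset.mul_sum, ← mul_add]
  rw [Finset.sum_comm, ← Finset.sum_add_distrib]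
  refine congrArg _ (Finset.sum_congr rfl fun y _ => ?_)
  rcases eq_or_ne (P x y) 0 with hxy | hxy
  · simp [hxy]
  exact mul_log_div_prod _ (fun i _ => (keepS_restr_pos hpos hP hxy).ne') fun i _ => hΛ x y hxy i

lemma klDiv_tensorBlocks (Λ : ∀ i, (∀ j : S i, X j.1) → (∀ j : S i, X j.1) → ℝ) :
    klDiv π P (tensorBlocks S Λ) =
      klDiv π P (tensorBlocks S fun i => keepS π P (S i)) +
        ∑ i, klDiv (margS π (S i)) (keepS π P (S i)) (Λ i) := by
  have hmarg : ∀ i xs, 0 ≤ margS π (S i) xs := fun i xs => (margS_pos hpos xs).le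
  rw [klDiv_eq_coe_klDivReal (L := tensorBlocks S fun i => keepS π P (S i)) fun x y hxy =>
    Finset.prod_ne_zero_iff.2 fun i _ => (keepS_restr_pos hpos hP hxy).ne']
  by_cases hΛ : ∀ x y, P x y ≠ 0 → ∀ i, Λ i (restr (S i) x) (restr (S i) y) ≠ 0
  · have hΛblock : ∀ i xs ys, keepS π P (S i) xs ys ≠ 0 → Λ i xs ys ≠ 0 := fun i xs ys h => by
      obtain ⟨x, y, rfl, rfl, hxy⟩ := exists_restr_of_keepS_ne_zero hpos h
      exact hΛ x y hxy i
    rw [klDiv_eq_coe_klDivReal (L := tensorBlocks S Λ) fun x y hxy =>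
        Finset.prod_ne_zero_iff.2 fun i _ => hΛ x y hxy i,
      klDivReal_tensorBlocks S hpos hP Λ hΛ, EReal.coe_add, EReal.coe_finset_sum_s15]
    simp only [klDiv_eq_coe_klDivReal (hΛblock _)]
  · push Not at hΛ
    obtain ⟨x, y, hxy, i, hi⟩ := hΛ
    rw [klDiv_eq_top (fun x => (hpos x).le) (hpos x) hxy
        (Finset.prod_eq_zero (Finset.mem_univ i) hi),
      EReal.sum_eq_top (fun i _ => klDiv_ne_bot (hmarg i) _ _) (Finset.mem_univ i)
        (klDiv_eq_top (hmarg i) (margS_pos hpos _) (keepS_restr_pos hpos hP hxy).ne' hi),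
      EReal.add_top_of_ne_bot (EReal.coe_ne_bot _)]

end ChainRule

theorem stmt15_general {d n : ℕ} {X : Fin d → Type*} [∀ i, Fintype (X i)]
    (S : Fin n → Finset (Fin d))
    (hdisj : ∀ i i', i ≠ i' → Disjoint (S i) (S i'))
    (hcov : ∀ j : Fin d, ∃ i, j ∈ S i)
    (π : (∀ i, X i) → ℝ) (hπ : IsProbMass π) (hpos : ∀ x, 0 < π x)
    (P : (∀ i, X i) → (∀ i, X i) → ℝ) (hP : IsTransMat P) :
    distIndepKL π P =
      klDiv π P (tensorBlocks S fun i => keepS π P (S i)) +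
        ∑ i, distIndepOn (S i) (margS π (S i)) (keepS π P (S i)) := by
  have := hπ.nonempty
  have : ∀ j, Nonempty {M : X j → X j → ℝ // IsTransMat M} :=
    fun j => ⟨⟨_, isTransMat_uniform _⟩⟩
  simp only [distIndepKL, distIndepOn, iInf_pi_subtype, tensorMat_eq_tensorBlocks hdisj hcov]
  refine (iInf_congr fun L => klDiv_tensorBlocks S hpos hP _).trans ?_
  exact iInf_add_sum_blocks (T := fun j => {M : X j → X j → ℝ // IsTransMat M}) hdisj hcov
    (klDiv_ne_bot (fun x => (hpos x).le) _ _)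
    (fun i L => klDiv (margS π (S i)) (keepS π P (S i)) fun xs ys => ∏ j, (L j).1 (xs j) (ys j))
    fun i L => klDiv_nonneg (fun xs => (margS_pos hpos xs).le) (isTransMat_keepS hpos hP)
      (isTransMat_pi fun j => (L j).2)

/-- Decomposition of the distance to independence: `𝕀^π(P)` equals the distance to
`(Sᵢ)`-factorizability of `P` plus the sum of the distances to independence of the
keep-`Sᵢ`-in transition matrices. -/
theorem stmt15 {d n : ℕ} {X : Fin d → Type*} [∀ i, Fintype (X i)]
    (S : Fin n → Finset (Fin d)) (hne : ∀ i, (S i).Nonempty)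
    (hdisj : ∀ i i', i ≠ i' → Disjoint (S i) (S i'))
    (hcov : ∀ j : Fin d, ∃ i, j ∈ S i)
    (π : (∀ i, X i) → ℝ) (hπ : IsProbMass π) (hpos : ∀ x, 0 < π x)
    (P : (∀ i, X i) → (∀ i, X i) → ℝ) (hP : IsTransMat P) :
    distIndepKL π P =
      klDiv π P (tensorBlocks S fun i => keepS π P (S i)) +
        ∑ i, distIndepOn (S i) (margS π (S i)) (keepS π P (S i)) :=
  stmt15_general S hdisj hcov π hπ hpos P hP
end
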